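/- Let d ≥ 2, k ≥ 1, and let ρ_s, ρ_a be the symmetric and antisymmetric Werner states on ℂ^{d}⊗ℂ^{d}. Then the trace norm of the difference of the two hiding states τ₁ = ((ρ_s+ρ_a)/2)^{⊗k} and τ₂ = ρ_s^{⊗k} equals ‖τ₁ − τ₂‖₁ = 2(1 − 2^{−k}). -/

import Mathlib

open Matrix Kronecker BigOperators
open scoped ComplexOrder Classical

set_option linter.unusedSectionVars false

/-- Total matrix square root: `PosSemidef.sqrt` on positive semidefinite matrices,
junk value `0` otherwise. -/
noncomputable def sqrtm {n : Type*} [Fintype n] [DecidableEq n] (M : Matrix n n ℂ) :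
    Matrix n n ℂ :=
  if h : M.PosSemidef then
    (h.1.eigenvectorUnitary : Matrix n n ℂ) * diagonal ((↑) ∘ Real.sqrt ∘ h.1.eigenvalues) *
      (star h.1.eigenvectorUnitary : Matrix n n ℂ)
  else 0

/-- The trace norm `‖X‖₁ = Tr √(X†X)`. -/
noncomputable def traceNorm {n : Type*} [Fintype n] [DecidableEq n] (X : Matrix n n ℂ) : ℝ :=
  ((sqrtm (Xᴴ * X)).trace).re

/-- The swap operator `V = Σ_{i,j}|ij⟩⟨ji|` on `ℂ^d ⊗ ℂ^d`. -/
def swapOp (d : ℕ) : Matrix (Fin d × Fin d) (Fin d × Fin d) ℂ :=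
  Matrix.of fun x y => if x.1 = y.2 ∧ x.2 = y.1 then 1 else 0

/-- The symmetric Werner state `ρ_s = (2/(d²+d)) P_sym` with `P_sym = (I+V)/2`. -/
noncomputable def wernerSym (d : ℕ) : Matrix (Fin d × Fin d) (Fin d × Fin d) ℂ :=
  ((2 / ((d : ℝ) ^ 2 + d) : ℝ) : ℂ) •
    (((1 : ℂ) / 2) • ((1 : Matrix (Fin d × Fin d) (Fin d × Fin d) ℂ) + swapOp d))

/-- The antisymmetric Werner state `ρ_a = (2/(d²−d)) P_asym` with `P_asym = (I−V)/2`. -/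
noncomputable def wernerAsym (d : ℕ) : Matrix (Fin d × Fin d) (Fin d × Fin d) ℂ :=
  ((2 / ((d : ℝ) ^ 2 - d) : ℝ) : ℂ) •
    (((1 : ℂ) / 2) • ((1 : Matrix (Fin d × Fin d) (Fin d × Fin d) ℂ) - swapOp d))

/-- `k`-fold tensor (Kronecker) power of a matrix. -/
def kpow {ι : Type*} (M : Matrix ι ι ℂ) (k : ℕ) :
    Matrix (Fin k → ι) (Fin k → ι) ℂ :=
  Matrix.of fun x y => ∏ t, M (x t) (y t)

/-! ### Auxiliary lemmas: entrywise tensor products -/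

section tpow

variable {ι : Type*} [Fintype ι] [DecidableEq ι] {k : ℕ}

/-- entrywise tensor power of a family of matrices -/
def tpow (k : ℕ) {ι : Type*} (M : Fin k → Matrix ι ι ℂ) :
    Matrix (Fin k → ι) (Fin k → ι) ℂ :=
  Matrix.of fun x y => ∏ t, M t (x t) (y t)

lemma tpow_mul (M N : Fin k → Matrix ι ι ℂ) :
    tpow k M * tpow k N = tpow k (fun t => M t * N t) := by
  ext x y
  simp only [tpow, Matrix.mul_apply, Matrix.of_apply]
  rw [Fintype.prod_sum (fun t j => M t (x t) j * N t j (y t))]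
  simp [Finset.prod_mul_distrib]

lemma tpow_conjTranspose (M : Fin k → Matrix ι ι ℂ) :
    (tpow k M)ᴴ = tpow k (fun t => (M t)ᴴ) := by
  ext x y
  simp [tpow, Matrix.conjTranspose_apply, map_prod]

lemma tpow_trace (M : Fin k → Matrix ι ι ℂ) :
    (tpow k M).trace = ∏ t, (M t).trace := by
  simp only [Matrix.trace, Matrix.diag, tpow, Matrix.of_apply]
  rw [Fintype.prod_sum (fun t j => M t j j)]

lemma tpow_eq_zero (M : Fin k → Matrix ι ι ℂ) (t₀ : Fin k) (h : M t₀ = 0) :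
    tpow k M = 0 := by
  ext x y
  simp only [tpow, Matrix.of_apply, Matrix.zero_apply]
  exact Finset.prod_eq_zero (Finset.mem_univ t₀) (by simp [h])

lemma tpow_smul (c : Fin k → ℂ) (M : Fin k → Matrix ι ι ℂ) :
    tpow k (fun t => c t • M t) = (∏ t, c t) • tpow k M := by
  ext x y
  simp [tpow, Finset.prod_mul_distrib]

lemma kpow_eq_tpow (M : Matrix ι ι ℂ) (k : ℕ) : kpow M k = tpow k (fun _ => M) := rfl

lemma kpow_sum (N : Bool → Matrix ι ι ℂ) (k : ℕ) :
    kpow (N false + N true) k = ∑ f : Fin k → Bool, tpow k (fun t => N (f t)) := by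
  ext x y
  simp only [kpow, Matrix.of_apply, Matrix.sum_apply, tpow]
  have : ∀ t : Fin k, (N false + N true) (x t) (y t) = ∑ b : Bool, N b (x t) (y t) := by
    simp [Fintype.sum_bool, add_comm]
  simp_rw [this]
  rw [Fintype.prod_sum (fun t b => N b (x t) (y t))]

end tpow

/-! ### Trace norm of a combination of orthogonal Hermitian projections -/

section ortho

variable {n F : Type*} [Fintype n] [DecidableEq n] [Fintype F] [DecidableEq F]

lemma sum_ortho_mul (Q : F → Matrix n n ℂ)
    (hmul : ∀ f g, Q f * Q g = if f = g then Q f else 0) (a b : F → ℝ) :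
    (∑ f, (a f : ℂ) • Q f) * (∑ g, (b g : ℂ) • Q g)
      = ∑ f, ((a f * b f : ℝ) : ℂ) • Q f := by
  rw [Finset.sum_mul_sum]
  have : ∀ f g : F, ((a f : ℂ) • Q f) * ((b g : ℂ) • Q g)
      = if f = g then ((a f * b f : ℝ) : ℂ) • Q f else 0 := by
    intro f g
    rw [Matrix.smul_mul, Matrix.mul_smul, hmul, smul_ite, smul_ite]
    split_ifs with h
    · subst h; rw [smul_smul]; push_cast; ring_nf
    · simp
  simp_rw [this]
  simp

lemma sum_ortho_herm (Q : F → Matrix n n ℂ) (hherm : ∀ f, (Q f)ᴴ = Q f) (a : F → ℝ) :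
    (∑ f, (a f : ℂ) • Q f)ᴴ = ∑ f, (a f : ℂ) • Q f := by
  rw [Matrix.conjTranspose_sum]
  exact Finset.sum_congr rfl fun f _ => by
    rw [Matrix.conjTranspose_smul, hherm, Complex.star_def, Complex.conj_ofReal]

lemma traceNorm_sum_ortho (Q : F → Matrix n n ℂ)
    (hmul : ∀ f g, Q f * Q g = if f = g then Q f else 0)
    (hherm : ∀ f, (Q f)ᴴ = Q f) (e : F → ℝ) :
    traceNorm (∑ f, (e f : ℂ) • Q f) = ∑ f, |e f| * ((Q f).trace).re := by
  set X := ∑ f, (e f : ℂ) • Q f with hXdef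
  set Y := ∑ f, ((|e f| : ℝ) : ℂ) • Q f with hYdef
  have hX : Xᴴ = X := sum_ortho_herm Q hherm e
  have hXX : Xᴴ * X = ∑ f, ((e f * e f : ℝ) : ℂ) • Q f := by
    rw [hX]; exact sum_ortho_mul Q hmul e e
  have hW : Y = (∑ f, ((Real.sqrt |e f| : ℝ) : ℂ) • Q f)ᴴ
      * (∑ f, ((Real.sqrt |e f| : ℝ) : ℂ) • Q f) := by
    rw [sum_ortho_herm Q hherm, sum_ortho_mul Q hmul]
    exact Finset.sum_congr rfl fun f _ => by rw [Real.mul_self_sqrt (abs_nonneg _)]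
  have hY : Y.PosSemidef := hW ▸ Matrix.posSemidef_conjTranspose_mul_self _
  have hY2 : Y ^ 2 = Xᴴ * X := by
    rw [pow_two, hYdef, sum_ortho_mul Q hmul, hXX]
    exact Finset.sum_congr rfl fun f _ => by rw [abs_mul_abs_self]
  have hps : (Xᴴ * X).PosSemidef := Matrix.posSemidef_conjTranspose_mul_self X
  have hsq : sqrtm (Xᴴ * X) = Y := by
    rw [sqrtm, dif_pos hps]
    open scoped MatrixOrder in
    · have key : CFC.sqrt (Xᴴ * X) = Y :=
        CFC.sqrt_unique (by rw [← pow_two]; exact hY2) hY.nonneg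
      rw [← key, CFC.sqrt_eq_cfc, cfc_nnreal_eq_real _ _ hps.nonneg, hps.1.cfc_eq]
      simp only [IsHermitian.cfc, Real.coe_sqrt, Real.coe_toNNReal', Unitary.conjStarAlgAut_apply]
      congr 3
      funext i
      simp [max_eq_left (hps.eigenvalues_nonneg i)]
  rw [traceNorm, hsq, hYdef, Matrix.trace_sum, Complex.re_sum]
  refine Finset.sum_congr rfl fun f _ => ?_
  rw [Matrix.trace_smul, smul_eq_mul]
  simp [Complex.mul_re]

end ortho

/-! ### The swap operator and the (anti)symmetric projections -/

lemma swap_mul_swap (d : ℕ) : swapOp d * swapOp d = 1 := by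
  ext x y
  rw [Matrix.mul_apply, Finset.sum_eq_single (x.2, x.1)]
  · simp [swapOp, Matrix.one_apply, Prod.ext_iff, and_comm, eq_comm]
  · intro z _ hz
    simp only [swapOp, Matrix.of_apply]
    split_ifs with h
    · exact absurd (Prod.ext h.2.symm h.1.symm) hz
    all_goals simp
  · simp

lemma swap_herm (d : ℕ) : (swapOp d)ᴴ = swapOp d := by
  ext x y
  simp only [swapOp, Matrix.conjTranspose_apply, Matrix.of_apply]
  have : (y.1 = x.2 ∧ y.2 = x.1) ↔ (x.1 = y.2 ∧ x.2 = y.1) :=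
    ⟨fun ⟨a, b⟩ => ⟨b.symm, a.symm⟩, fun ⟨a, b⟩ => ⟨b.symm, a.symm⟩⟩
  simp [this]

lemma swap_trace (d : ℕ) : (swapOp d).trace = (d : ℂ) := by
  simp only [Matrix.trace, Matrix.diag, swapOp, Matrix.of_apply]
  have : ∀ p : Fin d × Fin d, (p.1 = p.2 ∧ p.2 = p.1) ↔ p.1 = p.2 :=
    fun p => ⟨fun h => h.1, fun h => ⟨h, h.symm⟩⟩
  simp only [this]
  rw [Fintype.sum_prod_type]
  simp [Finset.sum_ite_eq]

noncomputable def Psym (d : ℕ) : Matrix (Fin d × Fin d) (Fin d × Fin d) ℂ :=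
  ((1 : ℂ)/2) • (1 + swapOp d)

noncomputable def Pasym (d : ℕ) : Matrix (Fin d × Fin d) (Fin d × Fin d) ℂ :=
  ((1 : ℂ)/2) • (1 - swapOp d)

noncomputable def Pb (d : ℕ) : Bool → Matrix (Fin d × Fin d) (Fin d × Fin d) ℂ :=
  fun b => if b then Pasym d else Psym d

lemma Pb_mul (d : ℕ) (b b' : Bool) :
    Pb d b * Pb d b' = if b = b' then Pb d b else 0 := by
  have h := swap_mul_swap d
  cases b <;> cases b' <;>
    simp only [Pb, Psym, Pasym, if_true, if_false, Bool.false_eq_true, Bool.true_eq_false] <;>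
    · rw [Matrix.smul_mul, Matrix.mul_smul]
      simp only [Matrix.add_mul, Matrix.mul_add, Matrix.sub_mul, Matrix.mul_sub,
        Matrix.one_mul, Matrix.mul_one, h]
      module

lemma Pb_herm (d : ℕ) (b : Bool) : (Pb d b)ᴴ = Pb d b := by
  have h := swap_herm d
  cases b <;>
    simp [Pb, Psym, Pasym, Matrix.conjTranspose_smul, Matrix.conjTranspose_add,
      Matrix.conjTranspose_sub, h, Complex.star_def, map_div₀]

/-- the ranks (traces) of the two projections -/
noncomputable def rrf (d : ℕ) : Bool → ℝ :=
  fun b => if b then ((d:ℝ)^2 - d)/2 else ((d:ℝ)^2 + d)/2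

lemma Pb_trace (d : ℕ) (b : Bool) : (Pb d b).trace = ((rrf d b : ℝ) : ℂ) := by
  have h1 : (1 : Matrix (Fin d × Fin d) (Fin d × Fin d) ℂ).trace = ((d:ℂ)^2) := by
    simp [Matrix.trace_one]
    ring
  cases b <;>
    simp [Pb, Psym, Pasym, rrf, Matrix.trace_smul, Matrix.trace_add, Matrix.trace_sub,
      swap_trace, h1] <;> push_cast <;> ring

/-- the coefficients of the two projections in `(ρ_s + ρ_a)/2` -/
noncomputable def ccf (d : ℕ) : Bool → ℝ :=
  fun b => if b then 1/((d:ℝ)^2 - d) else 1/((d:ℝ)^2 + d)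

/-- the tensor products of the projections -/
noncomputable def Qf (d k : ℕ) (f : Fin k → Bool) :
    Matrix (Fin k → Fin d × Fin d) (Fin k → Fin d × Fin d) ℂ :=
  tpow k (fun t => Pb d (f t))

lemma Qf_mul (d k : ℕ) (f g : Fin k → Bool) :
    Qf d k f * Qf d k g = if f = g then Qf d k f else 0 := by
  unfold Qf
  rw [tpow_mul]
  by_cases h : f = g
  · subst h
    rw [if_pos rfl]
    have : (fun t => Pb d (f t) * Pb d (f t)) = fun t => Pb d (f t) :=
      funext fun t => by rw [Pb_mul, if_pos rfl]
    rw [this]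
  · rw [if_neg h]
    obtain ⟨t₀, ht⟩ := Function.ne_iff.mp h
    exact tpow_eq_zero _ t₀ (by rw [Pb_mul, if_neg ht])

lemma Qf_herm (d k : ℕ) (f : Fin k → Bool) : (Qf d k f)ᴴ = Qf d k f := by
  unfold Qf
  rw [tpow_conjTranspose]
  simp only [Pb_herm]

lemma Qf_trace (d k : ℕ) (f : Fin k → Bool) :
    (Qf d k f).trace = ((∏ t, rrf d (f t) : ℝ) : ℂ) := by
  unfold Qf
  rw [tpow_trace, Complex.ofReal_prod]
  exact Finset.prod_congr rfl fun t _ => Pb_trace d (f t)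

/-- the signed coefficients of `τ₁ - τ₂` in the basis of orthogonal projections -/
noncomputable def ef (d k : ℕ) (f : Fin k → Bool) : ℝ :=
  (∏ t, ccf d (f t)) - (if f = (fun _ => false) then (2/((d:ℝ)^2 + d))^k else 0)

lemma X_eq (d k : ℕ) :
    kpow (((1 : ℂ) / 2) • (wernerSym d + wernerAsym d)) k - kpow (wernerSym d) k
      = ∑ f : Fin k → Bool, (ef d k f : ℂ) • Qf d k f := by
  have hM : ((1 : ℂ)/2) • (wernerSym d + wernerAsym d)
      = (fun b => ((ccf d b : ℝ) : ℂ) • Pb d b) false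
        + (fun b => ((ccf d b : ℝ) : ℂ) • Pb d b) true := by
    have e1 : wernerSym d = ((2/((d:ℝ)^2 + d) : ℝ) : ℂ) • Psym d := rfl
    have e2 : wernerAsym d = ((2/((d:ℝ)^2 - d) : ℝ) : ℂ) • Pasym d := rfl
    rw [e1, e2, smul_add, smul_smul, smul_smul]
    simp only [Pb, if_true, if_false, Bool.false_eq_true, ccf]
    congr 1 <;> congr 1 <;> push_cast <;> ring
  have hk1 : kpow (((1 : ℂ)/2) • (wernerSym d + wernerAsym d)) k
      = ∑ f : Fin k → Bool, ((∏ t, ccf d (f t) : ℝ) : ℂ) • Qf d k f := by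
    rw [hM, kpow_sum (fun b => ((ccf d b : ℝ) : ℂ) • Pb d b) k]
    refine Finset.sum_congr rfl fun f _ => ?_
    have : (fun t => (fun b => ((ccf d b : ℝ) : ℂ) • Pb d b) (f t))
        = fun t => ((ccf d (f t) : ℝ) : ℂ) • Pb d (f t) := rfl
    rw [this, tpow_smul, ← Complex.ofReal_prod]
    rfl
  have hk2 : kpow (wernerSym d) k
      = (((2/((d:ℝ)^2 + d))^k : ℝ) : ℂ) • Qf d k (fun _ => false) := by
    have e1 : wernerSym d = ((2/((d:ℝ)^2 + d) : ℝ) : ℂ) • Psym d := rfl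
    rw [e1, kpow_eq_tpow]
    have : (fun _ : Fin k => ((2/((d:ℝ)^2 + d) : ℝ) : ℂ) • Psym d)
        = fun t => ((fun _ : Fin k => ((2/((d:ℝ)^2 + d) : ℝ) : ℂ)) t) • Psym d := rfl
    rw [this, tpow_smul]
    rw [Finset.prod_const, Finset.card_univ, Fintype.card_fin]
    congr 1
    · push_cast; ring
  rw [hk1, hk2]
  have : (((2/((d:ℝ)^2 + d))^k : ℝ) : ℂ) • Qf d k (fun _ => false)
      = ∑ f : Fin k → Bool,
          ((if f = (fun _ => false) then (2/((d:ℝ)^2 + d))^k else 0 : ℝ) : ℂ) • Qf d k f := by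
    rw [Finset.sum_congr rfl (fun f _ => by
      rw [show ((if f = (fun _ => false) then (2/((d:ℝ)^2 + d))^k else 0 : ℝ) : ℂ) • Qf d k f
          = if f = (fun _ => false) then (((2/((d:ℝ)^2 + d))^k : ℝ) : ℂ) • Qf d k f else 0 from by
        split_ifs <;> simp])]
    rw [Finset.sum_ite_eq' Finset.univ (fun _ => false)
      (fun f => (((2/((d:ℝ)^2 + d))^k : ℝ) : ℂ) • Qf d k f)]
    simp
  rw [this, ← Finset.sum_sub_distrib]
  refine Finset.sum_congr rfl fun f _ => ?_
  rw [show ef d k f = (∏ t, ccf d (f t)) - (if f = (fun _ => false) then (2/((d:ℝ)^2 + d))^k else 0) from rfl,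
    Complex.ofReal_sub, sub_smul]

/-! ### The main theorem -/

/-- the trace norm of the difference of the two hiding states
`τ₁ = ((ρ_s+ρ_a)/2)^{⊗k}` and `τ₂ = ρ_s^{⊗k}` equals `2(1 − 2^{−k})`. -/
theorem traceNorm_hiding_states (d k : ℕ) (hd : 2 ≤ d) (hk : 1 ≤ k) :
    traceNorm
        (kpow (((1 : ℂ) / 2) • (wernerSym d + wernerAsym d)) k - kpow (wernerSym d) k)
      = 2 * (1 - ((2 : ℝ)⁻¹) ^ k) := by
  have hd2 : (2:ℝ) ≤ (d:ℝ) := by exact_mod_cast hd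
  have hA : (0:ℝ) < (d:ℝ)^2 + d := by nlinarith
  have hB : (0:ℝ) < (d:ℝ)^2 - d := by nlinarith
  have hA0 : ((d:ℝ)^2 + d) ≠ 0 := ne_of_gt hA
  have hccpos : ∀ b, 0 < ccf d b := by
    intro b
    cases b
    · exact one_div_pos.mpr hA
    · exact one_div_pos.mpr hB
  have hcr : ∀ b, ccf d b * rrf d b = 2⁻¹ := by
    intro b
    cases b <;>
      simp only [ccf, rrf, if_true, if_false, Bool.false_eq_true] <;>
      field_simp [show (d:ℝ) - 1 ≠ 0 by linarith] <;> ring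
  rw [X_eq, traceNorm_sum_ortho (Qf d k) (Qf_mul d k) (Qf_herm d k)]
  have hQtr : ∀ f : Fin k → Bool, ((Qf d k f).trace).re = ∏ t, rrf d (f t) := by
    intro f; rw [Qf_trace]; exact Complex.ofReal_re _
  simp only [hQtr]
  -- split off the all-`false` term
  set f₀ : Fin k → Bool := fun _ => false with hf₀
  rw [← Finset.add_sum_erase Finset.univ _ (Finset.mem_univ f₀)]
  have hcc0 : ∀ t : Fin k, ccf d (f₀ t) = 1/((d:ℝ)^2 + d) := fun t => rfl
  have hrr0 : ∀ t : Fin k, rrf d (f₀ t) = ((d:ℝ)^2 + d)/2 := fun t => rfl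
  -- the f₀ term
  have hterm0 : |ef d k f₀| * ∏ t, rrf d (f₀ t) = 1 - (2:ℝ)⁻¹^k := by
    have he0 : ef d k f₀ = (1/((d:ℝ)^2 + d))^k - (2/((d:ℝ)^2 + d))^k := by
      rw [show ef d k f₀ = (∏ t, ccf d (f₀ t))
          - (if f₀ = (fun _ => false) then (2/((d:ℝ)^2 + d))^k else 0) from rfl, if_pos rfl]
      congr 1
      rw [Finset.prod_congr rfl (fun t _ => hcc0 t), Finset.prod_const,
        Finset.card_univ, Fintype.card_fin]
    have hle : (1/((d:ℝ)^2 + d))^k ≤ (2/((d:ℝ)^2 + d))^k := by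
      gcongr <;> norm_num
    have habs : |ef d k f₀| = (2/((d:ℝ)^2 + d))^k - (1/((d:ℝ)^2 + d))^k := by
      rw [he0, abs_of_nonpos (sub_nonpos.mpr hle), neg_sub]
    have hprod : (∏ t, rrf d (f₀ t)) = (((d:ℝ)^2 + d)/2)^k := by
      rw [Finset.prod_congr rfl (fun t _ => hrr0 t), Finset.prod_const,
        Finset.card_univ, Fintype.card_fin]
    rw [habs, hprod, sub_mul, ← mul_pow, ← mul_pow]
    have h1 : 2/((d:ℝ)^2 + d) * (((d:ℝ)^2 + d)/2) = 1 := by field_simp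
    have h2 : 1/((d:ℝ)^2 + d) * (((d:ℝ)^2 + d)/2) = 2⁻¹ := by
      field_simp
    rw [h1, h2, one_pow]
  -- the remaining terms
  have hterm : ∀ f ∈ Finset.univ.erase f₀,
      |ef d k f| * ∏ t, rrf d (f t) = (2:ℝ)⁻¹^k := by
    intro f hf
    have hne : f ≠ f₀ := Finset.ne_of_mem_erase hf
    have hef : ef d k f = ∏ t, ccf d (f t) := by
      rw [show ef d k f = (∏ t, ccf d (f t))
          - (if f = (fun _ => false) then (2/((d:ℝ)^2 + d))^k else 0) from rfl,
        if_neg (by simpa [hf₀] using hne), sub_zero]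
    rw [hef, abs_of_pos (Finset.prod_pos fun t _ => hccpos (f t)),
      ← Finset.prod_mul_distrib, Finset.prod_congr rfl (fun t _ => hcr (f t)),
      Finset.prod_const, Finset.card_univ, Fintype.card_fin]
  rw [Finset.sum_congr rfl hterm, Finset.sum_const,
    Finset.card_erase_of_mem (Finset.mem_univ f₀), Finset.card_univ]
  have hcard : Fintype.card (Fin k → Bool) = 2^k := by
    rw [Fintype.card_fun, Fintype.card_bool, Fintype.card_fin]
  rw [hcard, hterm0, nsmul_eq_mul, Nat.cast_sub (Nat.one_le_two_pow), Nat.cast_pow]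
  push_cast
  have hmul1 : (2:ℝ)^k * (2:ℝ)⁻¹^k = 1 := by
    rw [← mul_pow]
    norm_num
  linear_combination hmul1
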